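/- arXiv:2003.10702 — 7 statements merged into one kernel-verified Lean document; each statement's English description precedes it below -/
import Mathlib

section
/- (Confounded binary exposure-outcome lower bound, Robins–Manski form) Let (X, Y) be jointly distributed binary random variables generated as X = f_X(R_X), Y = f_Y(X, R_Y) where (R_X, R_Y) is a possibly dependent pair of response-function variables, and define the potential outcome probabilities π_x := Σ_{(r_X,r_Y)} 1[f_Y(x, r_Y)=1] P(R_X=r_X, R_Y=r_Y) for x ∈ {0,1}. Then π_1 − π_0 ≥ P(X=0, Y=0) + P(X=1, Y=1) − 1. -/
open Finset

/-- Robins–Manski lower bound for the confounded binary exposure–outcome model: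
with `X = f_X(R_X)`, `Y = f_Y(X, R_Y)` and an arbitrary joint law `μ` of the
response-function variables, the causal risk difference `π₁ − π₀` is at least
`P(X=0,Y=0) + P(X=1,Y=1) − 1`. -/
theorem confounded_binary_lower_bound
    (RX RY : Type) [Fintype RX] [Fintype RY]
    (μ : RX → RY → ℝ)
    (hnn : ∀ rX rY, 0 ≤ μ rX rY)
    (hsum : ∑ rX : RX, ∑ rY : RY, μ rX rY = 1)
    (fX : RX → Bool) (fY : Bool → RY → Bool)
    (π : Bool → ℝ)
    (hπ : ∀ x, π x = ∑ rX : RX, ∑ rY : RY, (if fY x rY = true then μ rX rY else 0))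
    (pXY : Bool → Bool → ℝ)
    (hpXY : ∀ x y, pXY x y =
      ∑ rX : RX, ∑ rY : RY, (if fX rX = x ∧ fY (fX rX) rY = y then μ rX rY else 0)) :
    π true - π false ≥ pXY false false + pXY true true - 1 := by
  have key : ∀ rX rY,
      (if fX rX = false ∧ fY (fX rX) rY = false then μ rX rY else 0)
      + (if fX rX = true ∧ fY (fX rX) rY = true then μ rX rY else 0)
      - μ rX rY
      ≤ (if fY true rY = true then μ rX rY else 0)
        - (if fY false rY = true then μ rX rY else 0) := by
    intro rX rY
    have h := hnn rX rY
    cases hx : fX rX <;> cases ha : fY true rY <;> cases hb : fY false rY <;>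
      simp [hx, ha, hb] <;> linarith
  have H : ∑ rX : RX, ∑ rY : RY,
      ((if fX rX = false ∧ fY (fX rX) rY = false then μ rX rY else 0)
      + (if fX rX = true ∧ fY (fX rX) rY = true then μ rX rY else 0)
      - μ rX rY)
      ≤ ∑ rX : RX, ∑ rY : RY,
      ((if fY true rY = true then μ rX rY else 0)
        - (if fY false rY = true then μ rX rY else 0)) :=
    Finset.sum_le_sum fun rX _ => Finset.sum_le_sum fun rY _ => key rX rY
  simp only [Finset.sum_sub_distrib, Finset.sum_add_distrib] at H
  rw [hπ, hπ, hpXY, hpXY]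
  linarith [H]
end

section
/- (Confounded binary exposure-outcome upper bound) Under the same setup as the confounded binary exposure-outcome model, π_1 − π_0 ≤ 1 − P(X=1, Y=0) − P(X=0, Y=1). -/
open Finset

/-- Robins–Manski lower bound for the confounded binary exposure–outcome model:
with `X = f_X(R_X)`, `Y = f_Y(X, R_Y)` and an arbitrary joint law `μ` of the
response-function variables, the causal risk difference `π₁ − π₀` is at most
`1 − P(X=1,Y=0) − P(X=0,Y=1)`. -/
theorem confounded_binary_upper_bound
    (RX RY : Type) [Fintype RX] [Fintype RY]
    (μ : RX → RY → ℝ)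
    (hnn : ∀ rX rY, 0 ≤ μ rX rY)
    (hsum : ∑ rX : RX, ∑ rY : RY, μ rX rY = 1)
    (fX : RX → Bool) (fY : Bool → RY → Bool)
    (π : Bool → ℝ)
    (hπ : ∀ x, π x = ∑ rX : RX, ∑ rY : RY, (if fY x rY = true then μ rX rY else 0))
    (pXY : Bool → Bool → ℝ)
    (hpXY : ∀ x y, pXY x y =
      ∑ rX : RX, ∑ rY : RY, (if fX rX = x ∧ fY (fX rX) rY = y then μ rX rY else 0)) :
    π true - π false ≤ 1 - pXY true false - pXY false true := by
  rw [hπ, hπ, hpXY, hpXY, ← hsum]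
  rw [← Finset.sum_sub_distrib, ← Finset.sum_sub_distrib, ← Finset.sum_sub_distrib]
  apply Finset.sum_le_sum
  intro rX _
  rw [← Finset.sum_sub_distrib, ← Finset.sum_sub_distrib, ← Finset.sum_sub_distrib]
  apply Finset.sum_le_sum
  intro rY _
  have := hnn rX rY
  cases h : fX rX <;> cases h1 : fY true rY <;> cases h2 : fY false rY <;>
    simp [h, h1, h2] <;> linarith
end

section
/- (Tightness of the confounded lower bound) For any p₀₀, p₀₁, p₁₀, p₁₁ ≥ 0 with p₀₀ + p₀₁ + p₁₀ + p₁₁ = 1, there exists a joint distribution of response-function variables (R_X, R_Y) with R_X ∈ {0,1} and R_Y ∈ {0,1,2,3} (encoding the four functions {0,1} → {0,1}) such that the induced observed joint distribution satisfies P(X=x, Y=y) = p_{xy} for all x,y, and the causal risk difference π_1 − π_0 equals p₀₀ + p₁₁ − 1. -/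
open Finset

/-- The canonical response function for a binary outcome with binary exposure:
`r_Y = 0`: `y ≡ 0`; `r_Y = 1`: `y = 1 − x`; `r_Y = 2`: `y = x`; `r_Y = 3`: `y ≡ 1`. -/
def fYcanon (x : Bool) (rY : Fin 4) : Bool :=
  if rY = 0 then false
  else if rY = 1 then !x
  else if rY = 2 then x
  else true

/-- Tightness of the confounded lower bound: any observed joint distribution
`(p₀₀, p₀₁, p₁₀, p₁₁)` of binary `(X, Y)` is compatible with a joint law of the
response-function variables `(R_X, R_Y)` whose causal risk difference equals
`p₀₀ + p₁₁ − 1`. -/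
theorem confounded_binary_lower_bound_tight
    (p00 p01 p10 p11 : ℝ)
    (h00 : 0 ≤ p00) (h01 : 0 ≤ p01) (h10 : 0 ≤ p10) (h11 : 0 ≤ p11)
    (hsum : p00 + p01 + p10 + p11 = 1) :
    ∃ μ : Bool → Fin 4 → ℝ,
      (∀ rX rY, 0 ≤ μ rX rY) ∧
      (∑ rX : Bool, ∑ rY : Fin 4, μ rX rY = 1) ∧
      (∀ x y : Bool,
        (∑ rY : Fin 4, (if fYcanon x rY = y then μ x rY else 0)) =
          if x then (if y then p11 else p10) else (if y then p01 else p00)) ∧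
      ((∑ rX : Bool, ∑ rY : Fin 4, (if fYcanon true rY = true then μ rX rY else 0)) -
        (∑ rX : Bool, ∑ rY : Fin 4, (if fYcanon false rY = true then μ rX rY else 0))
          = p00 + p11 - 1) := by
  refine ⟨fun rX rY => if rX then (if rY = 1 then p10 else if rY = 3 then p11 else 0)
      else (if rY = 0 then p00 else if rY = 1 then p01 else 0), ?_, ?_, ?_, ?_⟩
  · rintro (_|_) rY <;> fin_cases rY <;> simp [h00, h01, h10, h11]
  · simp [Fin.sum_univ_four]; linarith
  · rintro (_|_) (_|_) <;> simp [Fin.sum_univ_four, fYcanon]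
  · simp [Fintype.sum_bool, Fin.sum_univ_four, fYcanon]; linarith
end

section
/- (Ternary-exposure confounded bounds) Let X take values in {0,1,2} and Y in {0,1}, generated by X = f_X(R_X), Y = f_Y(X, R_Y) with arbitrarily dependent finite response-function variables (R_X, R_Y), and let π_x := P(f_Y(x, R_Y) = 1) for x ∈ {0,1,2}. Then π_2 − π_0 ≤ 1 − P(X=2, Y=0) − P(X=0, Y=1) and π_2 − π_0 ≥ −P(X=1,Y=0) − P(X=2,Y=0) − P(X=0,Y=1) − P(X=1,Y=1). -/
open Finset

/-- Bounds on the causal risk difference `π₂ − π₀` in the confounded model with a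
ternary exposure `X = f_X(R_X)` and binary outcome `Y = f_Y(X, R_Y)`, for every
joint law of the (arbitrarily dependent) response-function variables. -/
theorem confounded_ternary_bounds
    (RX RY : Type) [Fintype RX] [Fintype RY]
    (μ : RX → RY → ℝ)
    (hnn : ∀ rX rY, 0 ≤ μ rX rY)
    (hsum : ∑ rX : RX, ∑ rY : RY, μ rX rY = 1)
    (fX : RX → Fin 3) (fY : Fin 3 → RY → Bool)
    (π : Fin 3 → ℝ)
    (hπ : ∀ x, π x = ∑ rX : RX, ∑ rY : RY, (if fY x rY = true then μ rX rY else 0))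
    (pXY : Fin 3 → Bool → ℝ)
    (hpXY : ∀ x y, pXY x y =
      ∑ rX : RX, ∑ rY : RY, (if fX rX = x ∧ fY (fX rX) rY = y then μ rX rY else 0)) :
    π 2 - π 0 ≤ 1 - pXY 2 false - pXY 0 true ∧
    π 2 - π 0 ≥ -(pXY 1 false) - pXY 2 false - pXY 0 true - pXY 1 true := by
  have expand : ∀ (g : RX → RY → ℝ),
      (∑ rX : RX, ∑ rY : RY, g rX rY) = ∑ p : RX × RY, g p.1 p.2 := by
    intro g; rw [Fintype.sum_prod_type]
  simp only [hπ, hpXY, expand] at *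
  constructor
  · have h : (∑ p : RX × RY, (if fY 2 p.2 = true then μ p.1 p.2 else 0))
        - (∑ p : RX × RY, (if fY 0 p.2 = true then μ p.1 p.2 else 0))
        + (∑ p : RX × RY, (if fX p.1 = 2 ∧ fY (fX p.1) p.2 = false then μ p.1 p.2 else 0))
        + (∑ p : RX × RY, (if fX p.1 = 0 ∧ fY (fX p.1) p.2 = true then μ p.1 p.2 else 0))
        ≤ ∑ p : RX × RY, μ p.1 p.2 := by
      rw [← Finset.sum_sub_distrib, ← Finset.sum_add_distrib, ← Finset.sum_add_distrib]
      apply Finset.sum_le_sum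
      intro p _
      have hμ := hnn p.1 p.2
      have hx : fX p.1 = 0 ∨ fX p.1 = 1 ∨ fX p.1 = 2 := by omega
      rcases hx with h | h | h <;> rcases hb2 : fY 2 p.2 <;> rcases hb0 : fY 0 p.2 <;>
        simp [h, hb0, hb2] <;> linarith
    linarith
  · have h : (∑ p : RX × RY, (if fY 2 p.2 = true then μ p.1 p.2 else 0))
        - (∑ p : RX × RY, (if fY 0 p.2 = true then μ p.1 p.2 else 0))
        + (∑ p : RX × RY, (if fX p.1 = 1 ∧ fY (fX p.1) p.2 = false then μ p.1 p.2 else 0))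
        + (∑ p : RX × RY, (if fX p.1 = 2 ∧ fY (fX p.1) p.2 = false then μ p.1 p.2 else 0))
        + (∑ p : RX × RY, (if fX p.1 = 0 ∧ fY (fX p.1) p.2 = true then μ p.1 p.2 else 0))
        + (∑ p : RX × RY, (if fX p.1 = 1 ∧ fY (fX p.1) p.2 = true then μ p.1 p.2 else 0))
        ≥ 0 := by
      rw [← Finset.sum_sub_distrib, ← Finset.sum_add_distrib, ← Finset.sum_add_distrib,
        ← Finset.sum_add_distrib, ← Finset.sum_add_distrib]
      apply Finset.sum_nonneg
      intro p _
      have hμ := hnn p.1 p.2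
      have hx : fX p.1 = 0 ∨ fX p.1 = 1 ∨ fX p.1 = 2 := by omega
      rcases hx with h | h | h <;> rcases hb2 : fY 2 p.2 <;> rcases hb0 : fY 0 p.2 <;>
        rcases hb1 : fY 1 p.2 <;> simp [h, hb0, hb1, hb2] <;> linarith
    linarith
end

section
/- (Measurement-error lower bound under monotonicity) Let X, Y, Y2 be binary with X ⟂ (R_Y, R_{Y2}), Y = f_Y(X, R_Y), Y2 = f_{Y2}(Y, R_{Y2}), where the response functions of Y2 satisfy monotonicity (the pattern f_{Y2}(y, r) = 1 − y is excluded, i.e., for every realized r, f_{Y2}(1, r) ≥ f_{Y2}(0, r)). With π_x := P(f_Y(x, R_Y) = 1), if P(X = x) > 0 for x ∈ {0,1}, then π_1 − π_0 ≥ 2·P(Y2=0 ∣ X=0) − 2·P(Y2=0 ∣ X=1) − 1. -/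
open Finset

/-- Measurement-error lower bound under monotone misclassification: with binary
exposure `X` independent of the response-function pair `(R_Y, R_{Y2})`,
unobserved true outcome `Y = f_Y(X, R_Y)`, observed outcome `Y2 = f_{Y2}(Y, R_{Y2})`,
and the anti-monotone response pattern for `Y2` excluded with probability one,
the causal risk difference satisfies
`π₁ − π₀ ≥ 2·P(Y2=0 ∣ X=0) − 2·P(Y2=0 ∣ X=1) − 1`. -/
theorem measurement_error_lower_bound
    (RY RY2 : Type) [Fintype RY] [Fintype RY2]
    (ν : Bool → RY → RY2 → ℝ)
    (hnn : ∀ x rY rY2, 0 ≤ ν x rY rY2)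
    (hsum : ∑ x : Bool, ∑ rY : RY, ∑ rY2 : RY2, ν x rY rY2 = 1)
    (hind : ∀ x rY rY2, ν x rY rY2 =
      (∑ rY' : RY, ∑ rY2' : RY2, ν x rY' rY2') * (∑ x' : Bool, ν x' rY rY2))
    (fY : Bool → RY → Bool) (fY2 : Bool → RY2 → Bool)
    (hmono : ∀ rY2 : RY2,
      0 < ∑ x : Bool, ∑ rY : RY, ν x rY rY2 →
      (fY2 false rY2 = true → fY2 true rY2 = true))
    (pX : Bool → ℝ)
    (hpX : ∀ x, pX x = ∑ rY : RY, ∑ rY2 : RY2, ν x rY rY2)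
    (hpXpos : ∀ x, 0 < pX x)
    (π : Bool → ℝ)
    (hπ : ∀ x, π x = ∑ x' : Bool, ∑ rY : RY, ∑ rY2 : RY2,
      (if fY x rY = true then ν x' rY rY2 else 0))
    (condY2zero : Bool → ℝ)
    (hcond : ∀ x, condY2zero x =
      (∑ rY : RY, ∑ rY2 : RY2,
        (if fY2 (fY x rY) rY2 = false then ν x rY rY2 else 0)) / pX x) :
    π true - π false ≥ 2 * condY2zero false - 2 * condY2zero true - 1 := by
  classical
  obtain ⟨μ, hμdef⟩ : ∃ μ : RY → RY2 → ℝ, ∀ r s, μ r s = ∑ x : Bool, ν x r s :=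
    ⟨_, fun _ _ => rfl⟩
  have hμnn : ∀ r s, 0 ≤ μ r s := fun r s => by
    rw [hμdef]; exact Finset.sum_nonneg fun x _ => hnn x r s
  have hν : ∀ x r s, ν x r s = pX x * μ r s := by
    intro x r s
    rw [hpX, hμdef]; exact hind x r s
  have hπ' : ∀ x, π x = ∑ r : RY, ∑ s : RY2, (if fY x r = true then μ r s else 0) := by
    intro x
    rw [hπ, Finset.sum_comm]
    refine Finset.sum_congr rfl fun r _ => ?_
    rw [Finset.sum_comm]
    refine Finset.sum_congr rfl fun s _ => ?_
    by_cases h : fY x r = true <;> simp [h, hμdef]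
  have hc : ∀ x, condY2zero x
      = ∑ r : RY, ∑ s : RY2, (if fY2 (fY x r) s = false then μ r s else 0) := by
    intro x
    rw [hcond]
    have hnum : (∑ r : RY, ∑ s : RY2, (if fY2 (fY x r) s = false then ν x r s else 0))
        = pX x * ∑ r : RY, ∑ s : RY2, (if fY2 (fY x r) s = false then μ r s else 0) := by
      rw [Finset.mul_sum]
      refine Finset.sum_congr rfl fun r _ => ?_
      rw [Finset.mul_sum]
      refine Finset.sum_congr rfl fun s _ => ?_
      by_cases h : fY2 (fY x r) s = false <;> simp [h, hν]
    rw [hnum, mul_comm, mul_div_assoc, div_self (ne_of_gt (hpXpos x)), mul_one]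
  have h1 : ∑ r : RY, ∑ s : RY2, μ r s = 1 := by
    rw [← hsum,
      show (∑ x : Bool, ∑ rY : RY, ∑ rY2 : RY2, ν x rY rY2)
        = ∑ rY : RY, ∑ x : Bool, ∑ rY2 : RY2, ν x rY rY2 from Finset.sum_comm]
    refine Finset.sum_congr rfl fun r _ => ?_
    rw [Finset.sum_comm]
    refine Finset.sum_congr rfl fun s _ => ?_
    exact hμdef r s
  have key : ∀ r s,
      2 * (if fY2 (fY false r) s = false then μ r s else 0)
        - 2 * (if fY2 (fY true r) s = false then μ r s else 0) - μ r s
      ≤ (if fY true r = true then μ r s else 0)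
        - (if fY false r = true then μ r s else 0) := by
    intro r s
    rcases eq_or_lt_of_le (hμnn r s) with hz | hpos
    · split_ifs <;> rw [← hz] <;> norm_num
    · have hsupp : 0 < ∑ x : Bool, ∑ r' : RY, ν x r' s := by
        have hle : μ r s ≤ ∑ x : Bool, ∑ r' : RY, ν x r' s := by
          rw [hμdef]
          refine Finset.sum_le_sum fun x _ => ?_
          exact Finset.single_le_sum (fun r' _ => hnn x r' s) (Finset.mem_univ r)
        linarith
      have hm := hmono s hsupp
      cases h0 : fY false r <;> cases h1' : fY true r <;>
        cases hg0 : fY2 false s <;> cases hg1 : fY2 true s <;>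
        (try simp only [h0, h1', hg0, hg1]) <;>
        first
          | linarith [hμnn r s]
          | (norm_num <;> linarith [hμnn r s])
          | (exact absurd (hm hg0) (by simp [hg1]))
  have hsumle :
      ∑ r : RY, ∑ s : RY2,
        (2 * (if fY2 (fY false r) s = false then μ r s else 0)
          - 2 * (if fY2 (fY true r) s = false then μ r s else 0) - μ r s)
      ≤ ∑ r : RY, ∑ s : RY2,
        ((if fY true r = true then μ r s else 0)
          - (if fY false r = true then μ r s else 0)) :=
    Finset.sum_le_sum fun r _ => Finset.sum_le_sum fun s _ => key r s
  simp only [Finset.sum_sub_distrib, ← Finset.mul_sum] at hsumle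
  rw [h1] at hsumle
  rw [hπ' true, hπ' false, hc true, hc false]
  linarith
end

section
/- (Measurement-error upper bound under monotonicity) Under the same measurement-error model with monotone misclassification, π_1 − π_0 ≤ 2·P(Y2=0 ∣ X=0) − 2·P(Y2=0 ∣ X=1) + 1. -/
open Finset

/-!
Independence of `X` from `(R_Y, R_{Y2})` makes `ν x rY rY2 = P(X = x) · μ rY rY2`, where `μ` is
the law of `(R_Y, R_{Y2})`; so `π_x` and `P(Y2 = 0 ∣ X = x)` are both `μ`-averages, and the bound
follows by integrating a pointwise inequality. For a fixed response type, with `y_x := f_Y(x, R_Y)`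
and the monotone map `g := f_{Y2}(·, R_{Y2})`, one has
`[y₁] - [y₀] ≤ 2 [g y₀ = 0] - 2 [g y₁ = 0] + 1`: the left side is positive only if `y₁ = 1` and
`y₀ = 0`, and then `g y₀ = 0` or `g y₁ = 1` by monotonicity.
-/

namespace MeasurementError

lemma ite_sub_ite_le {g : Bool → Bool} {m : ℝ} (hm : 0 ≤ m)
    (hg : 0 < m → g false = true → g true = true) (y₀ y₁ : Bool) :
    (if y₁ = true then m else 0) - (if y₀ = true then m else 0) ≤
      2 * (if g y₀ = false then m else 0) - 2 * (if g y₁ = false then m else 0) + m := by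
  rcases hm.eq_or_lt with rfl | hpos
  · simp
  cases y₀ <;> cases y₁ <;> cases h₀ : g false <;> cases h₁ : g true <;>
    simp_all [two_mul]

variable {α β γ : Type*} [Fintype α] [Fintype β]

lemma sum_ite_sub_sum_ite_le [Fintype γ] (μ : β → γ → ℝ) (hμ : ∀ b c, 0 ≤ μ b c)
    (y : Bool → β → Bool) (g : Bool → γ → Bool)
    (hg : ∀ b c, 0 < μ b c → g false c = true → g true c = true) :
    (∑ b, ∑ c, if y true b = true then μ b c else 0) -
        ∑ b, ∑ c, (if y false b = true then μ b c else 0) ≤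
      2 * (∑ b, ∑ c, if g (y false b) c = false then μ b c else 0) -
        2 * (∑ b, ∑ c, if g (y true b) c = false then μ b c else 0) + ∑ b, ∑ c, μ b c := by
  simp only [mul_sum, ← sum_sub_distrib, ← sum_add_distrib]
  exact sum_le_sum fun b _ => sum_le_sum fun c _ =>
    ite_sub_ite_le (g := (g · c)) (hμ b c) (hg b c) (y false b) (y true b)

def marginal (ν : α → β → γ → ℝ) (b : β) (c : γ) : ℝ := ∑ a, ν a b c

lemma sum_ite_marginal [Fintype γ] (ν : α → β → γ → ℝ) (p : β → γ → Prop)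
    [∀ b c, Decidable (p b c)] :
    ∑ a, ∑ b, ∑ c, (if p b c then ν a b c else 0) =
      ∑ b, ∑ c, if p b c then marginal ν b c else 0 := by
  simp only [marginal, ite_sum_zero]
  rw [sum_comm]
  exact sum_congr rfl fun b _ => sum_comm

lemma sum_marginal [Fintype γ] (ν : α → β → γ → ℝ) :
    ∑ b, ∑ c, marginal ν b c = ∑ a, ∑ b, ∑ c, ν a b c := by
  simpa using (sum_ite_marginal ν fun (_ : β) (_ : γ) => True).symm

lemma marginal_le_sum {ν : α → β → γ → ℝ} (hν : ∀ a b c, 0 ≤ ν a b c) (b : β) (c : γ) :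
    marginal ν b c ≤ ∑ a, ∑ b', ν a b' c :=
  sum_le_sum fun a _ => single_le_sum (fun b' _ => hν a b' c) (mem_univ b)

lemma sum_ite_div_eq_sum_ite_marginal [Fintype γ] {ν : α → β → γ → ℝ}
    (hind : ∀ a b c, ν a b c = (∑ b', ∑ c', ν a b' c') * marginal ν b c) (a : α)
    (ha : ∑ b, ∑ c, ν a b c ≠ 0) (p : β → γ → Prop) [∀ b c, Decidable (p b c)] :
    (∑ b, ∑ c, if p b c then ν a b c else 0) / ∑ b, ∑ c, ν a b c =
      ∑ b, ∑ c, if p b c then marginal ν b c else 0 := by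
  rw [div_eq_iff ha, sum_mul]
  refine sum_congr rfl fun b _ => ?_
  rw [sum_mul]
  refine sum_congr rfl fun c _ => ?_
  split_ifs
  · exact (hind a b c).trans (mul_comm _ _)
  · exact (zero_mul _).symm

end MeasurementError

open MeasurementError in
/-- Measurement-error upper bound under monotone misclassification: with binary
exposure `X` independent of the response-function pair `(R_Y, R_{Y2})`,
unobserved true outcome `Y = f_Y(X, R_Y)`, observed outcome `Y2 = f_{Y2}(Y, R_{Y2})`,
and the anti-monotone response pattern for `Y2` excluded with probability one,
the causal risk difference satisfies
`π₁ − π₀ ≤ 2·P(Y2=0 ∣ X=0) − 2·P(Y2=0 ∣ X=1) + 1`. -/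
theorem measurement_error_upper_bound
    (RY RY2 : Type) [Fintype RY] [Fintype RY2]
    (ν : Bool → RY → RY2 → ℝ)
    (hnn : ∀ x rY rY2, 0 ≤ ν x rY rY2)
    (hsum : ∑ x : Bool, ∑ rY : RY, ∑ rY2 : RY2, ν x rY rY2 = 1)
    (hind : ∀ x rY rY2, ν x rY rY2 =
      (∑ rY' : RY, ∑ rY2' : RY2, ν x rY' rY2') * (∑ x' : Bool, ν x' rY rY2))
    (fY : Bool → RY → Bool) (fY2 : Bool → RY2 → Bool)
    (hmono : ∀ rY2 : RY2,
      0 < ∑ x : Bool, ∑ rY : RY, ν x rY rY2 →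
      (fY2 false rY2 = true → fY2 true rY2 = true))
    (pX : Bool → ℝ)
    (hpX : ∀ x, pX x = ∑ rY : RY, ∑ rY2 : RY2, ν x rY rY2)
    (hpXpos : ∀ x, 0 < pX x)
    (π : Bool → ℝ)
    (hπ : ∀ x, π x = ∑ x' : Bool, ∑ rY : RY, ∑ rY2 : RY2,
      (if fY x rY = true then ν x' rY rY2 else 0))
    (condY2zero : Bool → ℝ)
    (hcond : ∀ x, condY2zero x =
      (∑ rY : RY, ∑ rY2 : RY2,
        (if fY2 (fY x rY) rY2 = false then ν x rY rY2 else 0)) / pX x) :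
    π true - π false ≤ 2 * condY2zero false - 2 * condY2zero true + 1 := by
  have hπμ : ∀ x, π x = ∑ rY, ∑ rY2, if fY x rY = true then marginal ν rY rY2 else 0 :=
    fun x => (hπ x).trans (sum_ite_marginal ν _)
  have hcondμ : ∀ x, condY2zero x =
      ∑ rY, ∑ rY2, if fY2 (fY x rY) rY2 = false then marginal ν rY rY2 else 0 := fun x => by
    rw [hcond, hpX]
    exact sum_ite_div_eq_sum_ite_marginal hind x (hpX x ▸ (hpXpos x).ne') _
  have hbound := sum_ite_sub_sum_ite_le (marginal ν) (fun _ _ => sum_nonneg fun x _ => hnn x _ _)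
    fY fY2 fun rY rY2 hpos => hmono rY2 (hpos.trans_le (marginal_le_sum hnn rY rY2))
  rwa [sum_marginal, hsum, ← hπμ, ← hπμ, ← hcondμ, ← hcondμ] at hbound
end

section
/- (Instrumental variable bounds imply IV inequality) Let Z, X, Y be binary with Z ⟂ (R_X, R_Y), X = f_X(Z, R_X), Y = f_Y(X, R_Y), where (R_X, R_Y) is an arbitrarily dependent pair of finite response-function variables. Then for each x, y ∈ {0,1}: max_z P(X = x, Y = y ∣ Z = z) ≤ P(Y(X=x) = y) where Y(X=x) := f_Y(x, R_Y), assuming P(Z=z) > 0 for z ∈ {0,1}. -/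
open Finset

/-- Instrumental variable inequality: in the binary IV model with
`Z ⟂ (R_X, R_Y)`, `X = f_X(Z, R_X)`, `Y = f_Y(X, R_Y)`, every observed conditional
joint probability `P(X=x, Y=y ∣ Z=z)` is a lower bound on the interventional
probability `P(Y(X=x) = y) = P(f_Y(x, R_Y) = y)`. -/
theorem iv_inequality
    (RX RY : Type) [Fintype RX] [Fintype RY]
    (ν : Bool → RX → RY → ℝ)
    (hnn : ∀ z rX rY, 0 ≤ ν z rX rY)
    (hsum : ∑ z : Bool, ∑ rX : RX, ∑ rY : RY, ν z rX rY = 1)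
    (hind : ∀ z rX rY, ν z rX rY =
      (∑ rX' : RX, ∑ rY' : RY, ν z rX' rY') * (∑ z' : Bool, ν z' rX rY))
    (fX : Bool → RX → Bool) (fY : Bool → RY → Bool)
    (pZ : Bool → ℝ)
    (hpZ : ∀ z, pZ z = ∑ rX : RX, ∑ rY : RY, ν z rX rY)
    (hpZpos : ∀ z, 0 < pZ z)
    (cond : Bool → Bool → Bool → ℝ)
    (hcond : ∀ z x y, cond z x y =
      (∑ rX : RX, ∑ rY : RY,
        (if fX z rX = x ∧ fY (fX z rX) rY = y then ν z rX rY else 0)) / pZ z)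
    (πxy : Bool → Bool → ℝ)
    (hπ : ∀ x y, πxy x y = ∑ z : Bool, ∑ rX : RX, ∑ rY : RY,
      (if fY x rY = y then ν z rX rY else 0)) :
    ∀ x y z : Bool, cond z x y ≤ πxy x y := by
  intro x y z
  have hμnn : ∀ rX rY, 0 ≤ ∑ z' : Bool, ν z' rX rY :=
    fun rX rY => Finset.sum_nonneg fun _ _ => hnn _ _ _
  rw [hcond, div_le_iff₀ (hpZpos z), hπ]
  have hπeq : (∑ z' : Bool, ∑ rX : RX, ∑ rY : RY, if fY x rY = y then ν z' rX rY else 0)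
      = ∑ rX : RX, ∑ rY : RY, (if fY x rY = y then ∑ z' : Bool, ν z' rX rY else 0) := by
    rw [Finset.sum_comm]
    refine Finset.sum_congr rfl fun rX _ => ?_
    rw [Finset.sum_comm]
    refine Finset.sum_congr rfl fun rY _ => ?_
    by_cases hc : fY x rY = y <;> simp [hc]
  rw [hπeq, Finset.sum_mul]
  refine Finset.sum_le_sum fun rX _ => ?_
  rw [Finset.sum_mul]
  refine Finset.sum_le_sum fun rY _ => ?_
  by_cases hP : fX z rX = x ∧ fY (fX z rX) rY = y
  · obtain ⟨h1, h2⟩ := hP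
    rw [h1] at h2
    rw [if_pos ⟨h1, by rw [h1]; exact h2⟩, if_pos h2]
    rw [hind z rX rY, ← hpZ z]
    rw [mul_comm]
  · rw [if_neg hP]
    refine mul_nonneg ?_ (hpZpos z).le
    split
    · exact hμnn rX rY
    · exact le_refl 0
end
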